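/- Let q, u be indeterminates and set [x]_{q,u} = (q^x u − q^{-x})/(q − q^{-1}) for x ∈ ℤ, [m]_q = (q^m − q^{-m})/(q − q^{-1}), and q-binomials accordingly. On the ℚ(q,u)-vector space with basis (z_i ⊗ z_j)_{i,j≥0} define operators S and S' by: S(z_i⊗z_j) = Σ_{λ=0}^{j} u^λ (q^{-1}−q)^{-λ} binom_q(i+λ, λ) · q^{λ(1−3λ)/2} q^{λ(j−2i)} / (Π_{s=1}^{λ}[j−i−s]_{q,u}) · z_{i+λ}⊗z_{j−λ}, and S'(z_i⊗z_j) = Σ_{λ=0}^{j} u^λ (q−q^{-1})^{-λ} binom_q(i+λ, λ) · q^{λ(1−3λ)/2} q^{λ(j−2i)} / (Π_{s=1}^{λ}[j−i−λ+1−s]_{q,u}) · z_{i+λ}⊗z_{j−λ}. Then S ∘ S' = id and S' ∘ S = id. -/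

import Mathlib

/-!
Expanding `S' (S (z_i ⊗ z_j))`, the coefficient of `z_{i+m} ⊗ z_{j-m}` is
`∑_{l ≤ m} S_{i,j,l} S'_{i+l,j-l,m-l}`. The two denominators, together with a product of `m - 1`
brackets `[j - i - 1 - s - l]_{q,u}`, tile one window of `2m - 1` consecutive brackets, so the
coefficient is an `l`-independent prefactor times
`∑_l (-1)ˡ / ([l]! [m-l]!) ∏_{s < m-1} [j - i - 1 - s - l]_{q,u}`.
As `[y - l]_{q,u}` is a combination of `qˡ` and `q⁻ˡ`, the product is a Laurent polynomial in `qˡ`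
with exponents in `{1 - m, 3 - m, …, m - 1}`, and the alternating `q`-sum kills each such monomial:
its recursion in `m` gives `[m]! ∑_l (-1)ˡ rˡ / ([l]! [m-l]!) = ∏_{d < m} (1 - r q^{m-1-2d})`.
Hence `S' ∘ S = 1`. Both operators preserve the finite-dimensional spans of the `z_a ⊗ z_b` with
`a + b` fixed, so also `S ∘ S' = 1`.
-/

/-- The field `ℚ(q, u)`, realized as `ℚ(q)(u)`. -/
abbrev Stmt12K : Type := RatFunc (RatFunc ℚ)

/-- The indeterminate `q` in `ℚ(q,u)`. -/
noncomputable def stmt12q : Stmt12K := RatFunc.C RatFunc.X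

/-- The indeterminate `u` in `ℚ(q,u)`. -/
noncomputable def stmt12u : Stmt12K := RatFunc.X

/-- `[x]_{q,u} = (q^x u - q^{-x})/(q - q^{-1})` for `x ∈ ℤ`. -/
noncomputable def stmt12bqu (x : ℤ) : Stmt12K :=
  (stmt12q ^ x * stmt12u - stmt12q ^ (-x)) / (stmt12q - stmt12q⁻¹)

/-- The quantum integer `[m]_q`. -/
noncomputable def stmt12qnum (m : ℕ) : Stmt12K :=
  (stmt12q ^ m - stmt12q⁻¹ ^ m) / (stmt12q - stmt12q⁻¹)

/-- The quantum factorial `[m]_q!`. -/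
noncomputable def stmt12qfact : ℕ → Stmt12K
  | 0 => 1
  | n + 1 => stmt12qfact n * stmt12qnum (n + 1)

/-- The Gaussian `q`-binomial coefficient. -/
noncomputable def stmt12qbinom (m p : ℕ) : Stmt12K :=
  stmt12qfact m / (stmt12qfact p * stmt12qfact (m - p))

/-- Basis vector `z_i ⊗ z_j` of the vector space with basis `(z_i ⊗ z_j)_{i,j≥0}`. -/
noncomputable def stmt12zb (p : ℕ × ℕ) : (ℕ × ℕ) →₀ Stmt12K := Finsupp.single p 1

open Finset

lemma stmt12q_ne_zero : stmt12q ≠ 0 :=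
  (map_ne_zero _).2 RatFunc.X_ne_zero

lemma stmt12q_pow_ne_one {n : ℕ} (hn : n ≠ 0) : stmt12q ^ n ≠ 1 := by
  intro h
  rw [stmt12q, ← map_pow, ← map_one RatFunc.C, RatFunc.C_injective.eq_iff,
    ← RatFunc.algebraMap_X, ← map_pow, ← map_one (algebraMap (Polynomial ℚ) _),
    (RatFunc.algebraMap_injective ℚ).eq_iff] at h
  simpa [hn] using congrArg Polynomial.natDegree h

lemma stmt12u_ne_C (f : RatFunc ℚ) : stmt12u ≠ RatFunc.C f := by
  intro h
  refine RatFunc.transcendental_X (K := RatFunc ℚ) ?_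
  rw [← stmt12u, h, ← RatFunc.algebraMap_eq_C]
  exact isAlgebraic_algebraMap f

lemma stmt12q_sub_inv_ne_zero : stmt12q - stmt12q⁻¹ ≠ 0 := by
  intro h
  apply stmt12q_pow_ne_one two_ne_zero
  have := stmt12q_ne_zero
  field_simp at h
  linear_combination h

lemma stmt12qnum_ne_zero {m : ℕ} (hm : m ≠ 0) : stmt12qnum m ≠ 0 := by
  refine div_ne_zero (fun h => stmt12q_pow_ne_one (mul_ne_zero two_ne_zero hm) ?_)
    stmt12q_sub_inv_ne_zero
  have := stmt12q_ne_zero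
  rw [inv_pow, sub_eq_zero] at h
  field_simp at h
  rwa [pow_mul']

lemma stmt12qfact_ne_zero (m : ℕ) : stmt12qfact m ≠ 0 := by
  induction m with
  | zero => exact one_ne_zero
  | succ n ih => exact mul_ne_zero ih (stmt12qnum_ne_zero n.succ_ne_zero)

lemma stmt12bqu_ne_zero (x : ℤ) : stmt12bqu x ≠ 0 := by
  refine div_ne_zero (fun h => stmt12u_ne_C (RatFunc.X ^ (-x) / RatFunc.X ^ x) ?_)
    stmt12q_sub_inv_ne_zero
  have hx : stmt12q ^ x ≠ 0 := zpow_ne_zero _ stmt12q_ne_zero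
  rw [map_div₀, map_zpow₀, map_zpow₀, ← stmt12q, eq_div_iff hx]
  linear_combination h

lemma stmt12qnum_zero : stmt12qnum 0 = 0 := by simp [stmt12qnum]

lemma stmt12qnum_add (a b : ℕ) :
    stmt12qnum (a + b) = stmt12q⁻¹ ^ b * stmt12qnum a + stmt12q ^ a * stmt12qnum b := by
  have := stmt12q_ne_zero
  simp only [stmt12qnum, pow_add, inv_pow]
  field_simp
  ring

lemma stmt12qfact_succ_inv_mul (n : ℕ) :
    (stmt12qfact (n + 1))⁻¹ * stmt12qnum (n + 1) = (stmt12qfact n)⁻¹ := by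
  rw [stmt12qfact, mul_inv, mul_assoc, inv_mul_cancel₀ (stmt12qnum_ne_zero n.succ_ne_zero),
    mul_one]

/-- A `q`-analogue of `(1 - r)ᵐ / m!`. -/
noncomputable def altQSum (m : ℕ) (r : Stmt12K) : Stmt12K :=
  ∑ l ∈ range (m + 1), (-1) ^ l * (stmt12qfact l * stmt12qfact (m - l))⁻¹ * r ^ l

lemma stmt12qnum_mul_altQSum_succ (m : ℕ) (r : Stmt12K) :
    stmt12qnum (m + 1) * altQSum (m + 1) r =
      (1 - r * stmt12q ^ m) * altQSum m (r * stmt12q⁻¹) := by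
  set f : ℕ → Stmt12K := fun l => (-1) ^ l * (stmt12qfact l * stmt12qfact (m + 1 - l))⁻¹ * r ^ l
  have hsplit : ∀ l ∈ range (m + 2), stmt12qnum (m + 1) * f l =
      f l * stmt12q⁻¹ ^ l * stmt12qnum (m + 1 - l) +
        f l * stmt12q ^ (m + 1 - l) * stmt12qnum l := by
    intro l hl
    rw [← Nat.sub_add_cancel (mem_range_succ_iff.1 hl), stmt12qnum_add, Nat.add_sub_cancel]
    ring
  have hlow : ∑ l ∈ range (m + 2), f l * stmt12q⁻¹ ^ l * stmt12qnum (m + 1 - l) =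
      altQSum m (r * stmt12q⁻¹) := by
    rw [sum_range_succ, Nat.sub_self, stmt12qnum_zero, mul_zero, add_zero]
    refine sum_congr rfl fun l hl => ?_
    simp only [f, mul_inv, mul_pow]
    rw [show m + 1 - l = m - l + 1 by have := mem_range.1 hl; omega,
      ← stmt12qfact_succ_inv_mul (m - l)]
    ring
  have hhigh : ∑ l ∈ range (m + 2), f l * stmt12q ^ (m + 1 - l) * stmt12qnum l =
      -(r * stmt12q ^ m) * altQSum m (r * stmt12q⁻¹) := by
    rw [sum_range_succ', stmt12qnum_zero, mul_zero, add_zero, altQSum, mul_sum]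
    refine sum_congr rfl fun l hl => ?_
    have hlm : l ≤ m := mem_range_succ_iff.1 hl
    have hq : stmt12q ^ m = stmt12q ^ (m - l) * stmt12q ^ l := by
      rw [← pow_add, Nat.sub_add_cancel hlm]
    simp only [f, Nat.add_sub_add_right, mul_inv, mul_pow, hq]
    rw [← stmt12qfact_succ_inv_mul l, inv_pow, pow_succ, pow_succ]
    field_simp [stmt12q_ne_zero]
  rw [altQSum, mul_sum, sum_congr rfl hsplit, sum_add_distrib, hlow, hhigh]
  ring

lemma altQSum_succ_eq_zero_iff (m : ℕ) (r : Stmt12K) :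
    altQSum (m + 1) r = 0 ↔ (1 - r * stmt12q ^ m) * altQSum m (r * stmt12q⁻¹) = 0 := by
  rw [← stmt12qnum_mul_altQSum_succ, mul_eq_zero, or_iff_right (stmt12qnum_ne_zero m.succ_ne_zero)]

lemma altQSum_eq_zero {m d : ℕ} (hd : d ≤ m) {r : Stmt12K}
    (hr : r * stmt12q ^ (2 * d) = stmt12q ^ m) : altQSum (m + 1) r = 0 := by
  have hq := stmt12q_ne_zero
  rw [altQSum_succ_eq_zero_iff]
  induction m generalizing d r with
  | zero =>
    obtain rfl : d = 0 := Nat.le_zero.1 hd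
    simp_all
  | succ m ih =>
    rcases hd.eq_or_lt with rfl | hlt
    · have hr1 : r * stmt12q ^ (m + 1) = 1 := by
        rw [two_mul, pow_add, ← mul_assoc] at hr
        exact mul_right_cancel₀ (pow_ne_zero _ hq) (hr.trans (one_mul _).symm)
      rw [hr1, sub_self, zero_mul]
    · have hr' : r * stmt12q⁻¹ * stmt12q ^ (2 * d) = stmt12q ^ m := by
        rw [mul_right_comm, hr, pow_succ, mul_inv_cancel_right₀ hq]
      rw [(altQSum_succ_eq_zero_iff m _).2 (ih (Nat.lt_succ_iff.1 hlt) hr'), mul_zero]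

theorem prod_add_mul_pow {ι R : Type*} [DecidableEq ι] [CommSemiring R] (s : Finset ι)
    (a b : ι → R) (x y : R) (l : ℕ) :
    ∏ i ∈ s, (a i * x ^ l + b i * y ^ l) =
      ∑ t ∈ s.powerset, (∏ i ∈ t, a i) * (∏ i ∈ s \ t, b i) * (x ^ #t * y ^ #(s \ t)) ^ l := by
  rw [prod_add]
  refine sum_congr rfl fun t _ => ?_
  rw [prod_mul_distrib, prod_mul_distrib, prod_const, prod_const, mul_pow, ← pow_mul, ← pow_mul,
    ← pow_mul, ← pow_mul, mul_comm l, mul_comm l]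
  ring

/-- A `q`-difference of order `M + 1` kills every Laurent polynomial of degree `≤ M` in `qˡ` of
the same parity as `M`. -/
lemma sum_altQ_mul_prod_eq_zero (M : ℕ) (a b : ℕ → Stmt12K) :
    ∑ l ∈ range (M + 2), (-1) ^ l * (stmt12qfact l * stmt12qfact (M + 1 - l))⁻¹ *
      ∏ s ∈ range M, (a s * stmt12q ^ l + b s * stmt12q⁻¹ ^ l) = 0 := by
  simp_rw [prod_add_mul_pow, mul_sum]
  rw [sum_comm]
  refine sum_eq_zero fun t ht => ?_
  have htM : #t ≤ M := by simpa using card_le_card (mem_powerset.1 ht)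
  have hr : stmt12q ^ #t * stmt12q⁻¹ ^ #(range M \ t) * stmt12q ^ (2 * (M - #t)) =
      stmt12q ^ M := by
    rw [card_sdiff_of_subset (mem_powerset.1 ht), card_range, two_mul, pow_add, inv_pow,
      mul_assoc, inv_mul_cancel_left₀ (pow_ne_zero _ stmt12q_ne_zero), ← pow_add,
      Nat.add_sub_cancel' htM]
  calc _ = (∏ i ∈ t, a i) * (∏ i ∈ range M \ t, b i) *
        altQSum (M + 1) (stmt12q ^ #t * stmt12q⁻¹ ^ #(range M \ t)) := by
        rw [altQSum, mul_sum]
        exact sum_congr rfl fun l _ => by ring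
    _ = 0 := by rw [altQSum_eq_zero (Nat.sub_le M #t) hr, mul_zero]

lemma stmt12bqu_sub_natCast (y : ℤ) (l : ℕ) :
    stmt12bqu (y - l) = -stmt12q ^ (-y) / (stmt12q - stmt12q⁻¹) * stmt12q ^ l +
      stmt12q ^ y * stmt12u / (stmt12q - stmt12q⁻¹) * stmt12q⁻¹ ^ l := by
  have hq := stmt12q_ne_zero
  rw [stmt12bqu, neg_sub, zpow_sub₀ hq, zpow_sub₀ hq, zpow_neg, zpow_natCast, inv_pow]
  field_simp
  ring

lemma sum_altQ_mul_prod_stmt12bqu_eq_zero (M : ℕ) (x : ℤ) :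
    ∑ l ∈ range (M + 2), (-1) ^ l * (stmt12qfact l * stmt12qfact (M + 1 - l))⁻¹ *
      ∏ s ∈ range M, stmt12bqu (x - s - l) = 0 := by
  simp_rw [stmt12bqu_sub_natCast]
  exact sum_altQ_mul_prod_eq_zero M _ _

lemma two_dvd_mul_one_sub_three_mul (n : ℤ) : 2 ∣ n * (1 - 3 * n) := by
  have : n * (1 - 3 * n) = n * (n + 1) - 2 * (2 * n * n) := by ring
  rw [this]
  exact dvd_sub (Int.even_mul_succ_self n).two_dvd (dvd_mul_right 2 _)

lemma ediv_two_mul_one_sub_three_mul_add (l k a : ℤ) :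
    l * (1 - 3 * l) / 2 + l * a + (k * (1 - 3 * k) / 2 + k * (a - 3 * l)) =
      (l + k) * (1 - 3 * (l + k)) / 2 + (l + k) * a := by
  have : (l + k) * (1 - 3 * (l + k)) = l * (1 - 3 * l) + k * (1 - 3 * k) + (-3 * l * k) * 2 := by
    ring
  rw [this, Int.add_mul_ediv_right _ _ two_ne_zero,
    Int.add_ediv_of_dvd_left (two_dvd_mul_one_sub_three_mul l)]
  ring

lemma prod_stmt12bqu_window (x : ℤ) (l k : ℕ) :
    ∏ t ∈ range (2 * (l + k) - 1), stmt12bqu (x - 1 - t) =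
      (∏ s ∈ range l, stmt12bqu (x - (s + 1))) *
        ((∏ s ∈ range (l + k - 1), stmt12bqu (x - 1 - s - l)) *
          ∏ s ∈ range k, stmt12bqu (x - 2 * l - k - s)) := by
  rw [show 2 * (l + k) - 1 = l + ((l + k - 1) + k) by omega, prod_range_add, prod_range_add]
  congr 1
  · exact prod_congr rfl fun s _ => by congr 1; ring
  congr 1
  · exact prod_congr rfl fun s _ => by congr 1; push_cast; ring
  · exact prod_congr rfl fun s hs => by have := mem_range.1 hs; congr 1; omega

lemma prod_stmt12bqu_ne_zero (s : Finset ℕ) (f : ℕ → ℤ) : ∏ x ∈ s, stmt12bqu (f x) ≠ 0 :=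
  prod_ne_zero_iff.2 fun x _ => stmt12bqu_ne_zero (f x)

noncomputable def coeffS (i j l : ℕ) : Stmt12K :=
  stmt12u ^ l * ((stmt12q⁻¹ - stmt12q) ^ l)⁻¹ * stmt12qbinom (i + l) l *
    stmt12q ^ ((((l : ℤ)) * (1 - 3 * (l : ℤ))) / 2 + (l : ℤ) * ((j : ℤ) - 2 * (i : ℤ))) /
    ∏ s ∈ Finset.range l, stmt12bqu ((j : ℤ) - (i : ℤ) - ((s : ℤ) + 1))

noncomputable def coeffS' (i j l : ℕ) : Stmt12K :=
  stmt12u ^ l * ((stmt12q - stmt12q⁻¹) ^ l)⁻¹ * stmt12qbinom (i + l) l *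
    stmt12q ^ ((((l : ℤ)) * (1 - 3 * (l : ℤ))) / 2 + (l : ℤ) * ((j : ℤ) - 2 * (i : ℤ))) /
    ∏ s ∈ Finset.range l, stmt12bqu ((j : ℤ) - (i : ℤ) - (l : ℤ) - (s : ℤ))

/-- The part of `coeffS i j l * coeffS' (i + l) (j - l) (m - l)` that does not depend on `l`. -/
noncomputable def coeffPrefactor (i j m : ℕ) : Stmt12K :=
  stmt12u ^ m * ((stmt12q - stmt12q⁻¹) ^ m)⁻¹ * (stmt12qfact (i + m) / stmt12qfact i) *
    stmt12q ^ ((m : ℤ) * (1 - 3 * m) / 2 + m * ((j : ℤ) - 2 * i)) /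
    ∏ t ∈ range (2 * m - 1), stmt12bqu ((j : ℤ) - i - 1 - t)

lemma coeffS_mul_coeffS' {i j l k : ℕ} (hlk : l + k ≤ j) :
    coeffS i j l * coeffS' (i + l) (j - l) k =
      coeffPrefactor i j (l + k) * ((-1) ^ l * (stmt12qfact l * stmt12qfact k)⁻¹ *
        ∏ s ∈ range (l + k - 1), stmt12bqu ((j : ℤ) - i - 1 - s - l)) := by
  have hq := stmt12q_ne_zero
  have hc := stmt12q_sub_inv_ne_zero
  have hcast : ((j - l : ℕ) : ℤ) - ((i + l : ℕ) : ℤ) = (j : ℤ) - i - 2 * l := by omega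
  have hsign : ((stmt12q⁻¹ - stmt12q) ^ l)⁻¹ = (-1) ^ l * ((stmt12q - stmt12q⁻¹) ^ l)⁻¹ := by
    rw [← neg_sub, neg_pow, mul_inv, ← inv_pow, inv_neg, inv_one]
  have hexp : stmt12q ^ ((l : ℤ) * (1 - 3 * l) / 2 + l * ((j : ℤ) - 2 * i)) *
      stmt12q ^ ((k : ℤ) * (1 - 3 * k) / 2 + k * (((j - l : ℕ) : ℤ) - 2 * ((i + l : ℕ) : ℤ))) =
      stmt12q ^ (((l + k : ℕ) : ℤ) * (1 - 3 * ((l + k : ℕ) : ℤ)) / 2 +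
        ((l + k : ℕ) : ℤ) * ((j : ℤ) - 2 * i)) := by
    have : ((j - l : ℕ) : ℤ) - 2 * ((i + l : ℕ) : ℤ) = (j : ℤ) - 2 * i - 3 * l := by omega
    rw [← zpow_add₀ hq, this, Nat.cast_add, ediv_two_mul_one_sub_three_mul_add]
  have hwindow := prod_stmt12bqu_window ((j : ℤ) - i) l k
  simp only [coeffS, coeffS', coeffPrefactor, stmt12qbinom, hcast, hsign, hwindow, ← hexp,
    Nat.add_sub_cancel]
  rw [add_assoc i l k]
  generalize stmt12q - stmt12q⁻¹ = c at hc ⊢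
  field_simp [prod_stmt12bqu_ne_zero, stmt12qfact_ne_zero]
  ring

lemma coeffS_zero (i j : ℕ) : coeffS i j 0 = 1 := by
  simp [coeffS, stmt12qbinom, stmt12qfact, stmt12qfact_ne_zero]

lemma coeffS'_zero (i j : ℕ) : coeffS' i j 0 = 1 := by
  simp [coeffS', stmt12qbinom, stmt12qfact, stmt12qfact_ne_zero]

lemma sum_coeffS_mul_coeffS' (i : ℕ) {j m : ℕ} (hm : m ≤ j) :
    ∑ l ∈ range (m + 1), coeffS i j l * coeffS' (i + l) (j - l) (m - l) =
      if m = 0 then 1 else 0 := by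
  cases m with
  | zero => simp [coeffS_zero, coeffS'_zero]
  | succ M =>
    have hterm : ∀ l ∈ range (M + 2), coeffS i j l * coeffS' (i + l) (j - l) (M + 1 - l) =
        coeffPrefactor i j (M + 1) * ((-1) ^ l * (stmt12qfact l * stmt12qfact (M + 1 - l))⁻¹ *
          ∏ s ∈ range M, stmt12bqu ((j : ℤ) - i - 1 - s - l)) := by
      intro l hl
      have hlM : l + (M + 1 - l) = M + 1 := by have := mem_range.1 hl; omega
      rw [coeffS_mul_coeffS' (by omega), hlM, Nat.add_sub_cancel]
    rw [sum_congr rfl hterm, ← mul_sum, sum_altQ_mul_prod_stmt12bqu_eq_zero, mul_zero,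
      if_neg M.succ_ne_zero]

theorem Module.End.apply_apply_eq_self_of_invariant {K V : Type*} [Field K] [AddCommGroup V]
    [Module K V] {f g : Module.End K V} (hgf : g * f = 1) {W : Submodule K V}
    [FiniteDimensional K W] (hfW : ∀ v ∈ W, f v ∈ W) (hgW : ∀ v ∈ W, g v ∈ W) {v : V}
    (hv : v ∈ W) : f (g v) = v := by
  have hW : g.restrict hgW * f.restrict hfW = 1 := by
    ext w
    exact congr($hgf w)
  exact congr(($(mul_eq_one_comm.1 hW) ⟨v, hv⟩ : V))

section Triangular

variable (R : Type*) [Semiring R]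

noncomputable def totalDegreeSpan (n : ℕ) : Submodule R ((ℕ × ℕ) →₀ R) :=
  Submodule.span R ((fun p => Finsupp.single p 1) '' {p | p.1 + p.2 = n})

variable {R}

instance (K : Type*) [Field K] (n : ℕ) : FiniteDimensional K (totalDegreeSpan K n) := by
  refine FiniteDimensional.span_of_finite K ((Set.finite_Iic (n, n)).subset ?_ |>.image _)
  rintro ⟨i, j⟩ (h : i + j = n)
  exact ⟨by simp only; omega, by simp only; omega⟩

lemma single_mem_totalDegreeSpan (i j : ℕ) : Finsupp.single (i, j) 1 ∈ totalDegreeSpan R (i + j) :=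
  Submodule.subset_span ⟨(i, j), rfl, rfl⟩

lemma mapsTo_totalDegreeSpan {f : Module.End R ((ℕ × ℕ) →₀ R)} {a : ℕ → ℕ → ℕ → R}
    (hf : ∀ i j, f (Finsupp.single (i, j) 1) =
      ∑ l ∈ range (j + 1), a i j l • Finsupp.single (i + l, j - l) 1) (n : ℕ) :
    ∀ v ∈ totalDegreeSpan R n, f v ∈ totalDegreeSpan R n := by
  refine Submodule.span_le (p := (totalDegreeSpan R n).comap f).2 ?_
  rintro _ ⟨⟨i, j⟩, rfl : i + j = _, rfl⟩
  rw [SetLike.mem_coe, Submodule.mem_comap, hf]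
  refine Submodule.sum_mem _ fun l hl => Submodule.smul_mem _ _ ?_
  convert single_mem_totalDegreeSpan (R := R) (i + l) (j - l) using 2
  have := mem_range_succ_iff.1 hl
  omega

lemma apply_apply_single_of_triangular {f g : Module.End R ((ℕ × ℕ) →₀ R)} {a b : ℕ → ℕ → ℕ → R}
    (hf : ∀ i j, f (Finsupp.single (i, j) 1) =
      ∑ l ∈ range (j + 1), a i j l • Finsupp.single (i + l, j - l) 1)
    (hg : ∀ i j, g (Finsupp.single (i, j) 1) =
      ∑ l ∈ range (j + 1), b i j l • Finsupp.single (i + l, j - l) 1) (i j : ℕ) :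
    g (f (Finsupp.single (i, j) 1)) =
      ∑ m ∈ range (j + 1), (∑ l ∈ range (m + 1), a i j l * b (i + l) (j - l) (m - l)) •
        Finsupp.single (i + m, j - m) 1 := by
  have hinner : ∀ l ∈ range (j + 1), g (a i j l • Finsupp.single (i + l, j - l) 1) =
      ∑ k ∈ range (j + 1 - l), (a i j l * b (i + l) (j - l) k) •
        Finsupp.single (i + l + k, j - l - k) 1 := by
    intro l hl
    rw [map_smul, hg, smul_sum, Nat.sub_add_comm (mem_range_succ_iff.1 hl)]
    simp only [smul_smul]
  rw [hf, map_sum, sum_congr rfl hinner, ← sum_range_diag_flip]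
  refine sum_congr rfl fun m hm => ?_
  rw [sum_smul]
  refine sum_congr rfl fun l hl => ?_
  have := mem_range_succ_iff.1 hm
  have := mem_range_succ_iff.1 hl
  congr 3 <;> omega

end Triangular

lemma mul_eq_one_of_apply_eq_sum_coeffS {S S' : Module.End Stmt12K ((ℕ × ℕ) →₀ Stmt12K)}
    (hS : ∀ i j : ℕ, S (stmt12zb (i, j)) =
      ∑ l ∈ range (j + 1), coeffS i j l • stmt12zb (i + l, j - l))
    (hS' : ∀ i j : ℕ, S' (stmt12zb (i, j)) =
      ∑ l ∈ range (j + 1), coeffS' i j l • stmt12zb (i + l, j - l)) :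
    S' * S = 1 := by
  refine Finsupp.basisSingleOne.ext fun ⟨i, j⟩ => ?_
  rw [Finsupp.coe_basisSingleOne, Module.End.mul_apply, Module.End.one_apply,
    apply_apply_single_of_triangular hS hS', sum_congr rfl fun m hm =>
      by rw [sum_coeffS_mul_coeffS' i (mem_range_succ_iff.1 hm)]]
  simp

/-- the explicit triangular operators `S` (the stable map
`S_{V,V}(u)` for `V = L⁻_{1,a}` over `U_q(ŝl₂)`) and `S'` (the claimed formula
for its inverse) are mutually inverse. -/
theorem stmt12 (S S' : Module.End Stmt12K ((ℕ × ℕ) →₀ Stmt12K))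
    (hS : ∀ i j : ℕ, S (stmt12zb (i, j)) =
      ∑ l ∈ Finset.range (j + 1),
        (stmt12u ^ l * ((stmt12q⁻¹ - stmt12q) ^ l)⁻¹ * stmt12qbinom (i + l) l *
            stmt12q ^ ((((l : ℤ)) * (1 - 3 * (l : ℤ))) / 2 + (l : ℤ) * ((j : ℤ) - 2 * (i : ℤ))) /
            ∏ s ∈ Finset.range l, stmt12bqu ((j : ℤ) - (i : ℤ) - ((s : ℤ) + 1))) •
          stmt12zb (i + l, j - l))
    (hS' : ∀ i j : ℕ, S' (stmt12zb (i, j)) =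
      ∑ l ∈ Finset.range (j + 1),
        (stmt12u ^ l * ((stmt12q - stmt12q⁻¹) ^ l)⁻¹ * stmt12qbinom (i + l) l *
            stmt12q ^ ((((l : ℤ)) * (1 - 3 * (l : ℤ))) / 2 + (l : ℤ) * ((j : ℤ) - 2 * (i : ℤ))) /
            ∏ s ∈ Finset.range l, stmt12bqu ((j : ℤ) - (i : ℤ) - (l : ℤ) - (s : ℤ))) •
          stmt12zb (i + l, j - l)) :
    S * S' = 1 ∧ S' * S = 1 := by
  have hS'S : S' * S = 1 := mul_eq_one_of_apply_eq_sum_coeffS hS hS'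
  refine ⟨Finsupp.basisSingleOne.ext fun ⟨i, j⟩ => ?_, hS'S⟩
  rw [Finsupp.coe_basisSingleOne, Module.End.mul_apply, Module.End.one_apply]
  -- a left inverse is a right inverse on the finite-dimensional `S`- and `S'`-stable spaces
  exact Module.End.apply_apply_eq_self_of_invariant hS'S
    (mapsTo_totalDegreeSpan (a := coeffS) hS _) (mapsTo_totalDegreeSpan (a := coeffS') hS' _)
    (single_mem_totalDegreeSpan i j)
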